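/- For every z ∈ ℂ^N, the atomic ℓ0 norm ‖z‖_{𝒜,0} equals the minimum of rank(T(u)) over all x ∈ ℝ and u ∈ ℂ^N such that the (N+1)×(N+1) block matrix [[x, z^H],[z, T(u)]] is positive semidefinite, and this minimum is attained. -/

import Mathlib

open Matrix
open scoped ComplexOrder

/-- The steering vector `a(f) ∈ ℂ^N`, `a(f)_j = exp(2πi·j·f)` for `j = 0,…,N−1`. -/
noncomputable def steer (N : ℕ) (f : ℝ) : Fin N → ℂ :=
  fun j => Complex.exp (2 * (Real.pi : ℂ) * Complex.I * ((j : ℕ) : ℂ) * (f : ℂ))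

/-- The Hermitian Toeplitz matrix whose first row is `u`. -/
noncomputable def Toep {N : ℕ} (u : Fin N → ℂ) : Matrix (Fin N) (Fin N) ℂ :=
  Matrix.of fun j k =>
    if (j : ℕ) ≤ (k : ℕ) then u ⟨(k : ℕ) - (j : ℕ), Nat.lt_of_le_of_lt (Nat.sub_le _ _) k.isLt⟩
    else star (u ⟨(j : ℕ) - (k : ℕ), Nat.lt_of_le_of_lt (Nat.sub_le _ _) j.isLt⟩)

/-- The block matrix `[[x, zᴴ], [z, T(u)]]`. -/
noncomputable def smvBlock {N : ℕ} (x : ℝ) (z u : Fin N → ℂ) :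
    Matrix (Fin 1 ⊕ Fin N) (Fin 1 ⊕ Fin N) ℂ :=
  Matrix.fromBlocks (Matrix.of fun _ _ => (x : ℂ)) (Matrix.of fun _ j => star (z j))
    (Matrix.of fun i _ => z i) (Toep u)

/-- The atomic ℓ0 norm of `z ∈ ℂ^N`. -/
noncomputable def atomL0 {N : ℕ} (z : Fin N → ℂ) : ℕ :=
  sInf {K : ℕ | ∃ (f : Fin K → ℝ) (s : Fin K → ℂ),
    (∀ k, f k ∈ Set.Ico (0 : ℝ) 1) ∧ z = ∑ k, s k • steer N (f k)}

/-!
Write the positive semidefinite block matrix as the Gram matrix of vectors `v₀, v₁, …, v_N`: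
then `T(u)` is the Gram matrix of `v₁, …, v_N` and `z_i = ⟪v_i, v₀⟫`. Because `T(u)` is
Toeplitz, `v_j ↦ v_{j+1}` preserves inner products, so it extends to a unitary `U` of
`W = span {v₁, …, v_N}` with `v_j = U^(j-1) v₁`. Expanding `v₁` in eigenvectors of `U`, whose
eigenvalues lie on the unit circle and number at most `dim W = rank T(u)`, writes `z` as a sum of
at most `rank T(u)` steering vectors. Conversely, if `z = ∑ s_k a(f_k) = A s` with
`A = [a(f_1) ⋯ a(f_K)]`, then `u = ∑ conj a(f_k)` gives `T(u) = A Aᴴ` of rank at most `K`, and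
the block matrix with `x = ‖s‖²` is `G Gᴴ` for `G = [sᴴ; A]`.
-/

open Module
open scoped InnerProductSpace

section InnerProductSpace

variable {𝕜 E : Type*} [RCLike 𝕜] [NormedAddCommGroup E] [InnerProductSpace 𝕜 E]

theorem Matrix.conjTranspose_mul_self_eq_gram {m n : Type*} [Fintype m] (B : Matrix m n 𝕜) :
    Bᴴ * B = gram 𝕜 (fun j => WithLp.toLp 2 (fun i => B i j)) := by
  ext i j
  simp [gram_apply, mul_apply, EuclideanSpace.inner_eq_star_dotProduct, dotProduct, mul_comm]

theorem Matrix.rank_gram {ι : Type*} [Fintype ι] [FiniteDimensional 𝕜 E] (v : ι → E) :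
    (gram 𝕜 v).rank = finrank 𝕜 (Submodule.span 𝕜 (Set.range v)) := by
  let b := stdOrthonormalBasis 𝕜 E
  let e : E ≃ₗ[𝕜] (Fin (finrank 𝕜 E) → 𝕜) :=
    b.repr.toLinearEquiv.trans (WithLp.linearEquiv 2 𝕜 _)
  have hcols : Set.range (of fun i j => b.repr (v j) i).col = e.toLinearMap '' Set.range v := by
    rw [← Set.range_comp]
    rfl
  rw [gram_eq_conjTranspose_mul b, rank_conjTranspose_mul_self, rank_eq_finrank_span_cols, hcols,
    Submodule.span_image, LinearEquiv.finrank_map_eq]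

theorem norm_sum_smul_eq_of_inner_eq {ι : Type*} [Fintype ι] {a b : ι → E}
    (h : ∀ i j, ⟪a i, a j⟫_𝕜 = ⟪b i, b j⟫_𝕜) (c : ι → 𝕜) :
    ‖∑ i, c i • a i‖ = ‖∑ i, c i • b i‖ := by
  have key : ⟪∑ i, c i • a i, ∑ i, c i • a i⟫_𝕜 = ⟪∑ i, c i • b i, ∑ i, c i • b i⟫_𝕜 := by
    simp only [sum_inner, inner_sum, inner_smul_left, inner_smul_right, h]
  rw [inner_self_eq_norm_sq_to_K, inner_self_eq_norm_sq_to_K] at key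
  exact (sq_eq_sq₀ (norm_nonneg _) (norm_nonneg _)).mp (by exact_mod_cast key)

theorem LinearMap.exists_linearIsometry_of_norm_eq {V : Type*} [AddCommGroup V] [Module 𝕜 V]
    (φ ψ : V →ₗ[𝕜] E) (h : ∀ c, ‖ψ c‖ = ‖φ c‖) :
    ∃ L : LinearMap.range φ →ₗᵢ[𝕜] E, ∀ c, L (φ.rangeRestrict c) = ψ c := by
  obtain ⟨σ, hσ⟩ := φ.rangeRestrict.exists_rightInverse_of_surjective φ.range_rangeRestrict
  have hφσ : ∀ s, φ (σ s) = s := fun s => congrArg Subtype.val (LinearMap.congr_fun hσ s)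
  refine ⟨⟨ψ ∘ₗ σ, fun s => by simp [h, hφσ]⟩, fun c => ?_⟩
  change ψ (σ (φ.rangeRestrict c)) = ψ c
  rw [← sub_eq_zero, ← map_sub, ← norm_eq_zero, h, map_sub, hφσ]
  simp

theorem exists_linearIsometry_castSucc_eq_succ [FiniteDimensional 𝕜 E] {n : ℕ}
    (x : Fin (n + 1) → E)
    (hx : ∀ i j : Fin n, ⟪x i.succ, x j.succ⟫_𝕜 = ⟪x i.castSucc, x j.castSucc⟫_𝕜) :
    ∃ U : E →ₗᵢ[𝕜] E, ∀ i : Fin n, U (x i.castSucc) = x i.succ := by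
  let φ := Fintype.linearCombination 𝕜 fun i : Fin n => x i.castSucc
  let ψ := Fintype.linearCombination 𝕜 fun i : Fin n => x i.succ
  obtain ⟨L, hL⟩ := φ.exists_linearIsometry_of_norm_eq ψ fun c => by
    simp only [φ, ψ, Fintype.linearCombination_apply]
    exact norm_sum_smul_eq_of_inner_eq hx c
  refine ⟨L.extend, fun i => ?_⟩
  simpa [hL, φ, ψ, Fintype.linearCombination_apply_single] using
    L.extend_apply (φ.rangeRestrict (Pi.single i 1))

namespace LinearIsometry

theorem norm_eq_one_of_hasEigenvector (U : E →ₗᵢ[𝕜] E) {μ : 𝕜} {v : E}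
    (hv : End.HasEigenvector U.toLinearMap μ v) : ‖μ‖ = 1 := by
  have h := U.norm_map v
  rw [← LinearIsometry.coe_toLinearMap, hv.apply_eq_smul, norm_smul] at h
  exact (mul_eq_right₀ (norm_ne_zero_iff.mpr hv.2)).mp h

theorem orthogonal_mem_invtSubmodule [FiniteDimensional 𝕜 E] (U : E →ₗᵢ[𝕜] E)
    {p : Submodule 𝕜 E} (hp : p ∈ End.invtSubmodule U.toLinearMap) :
    pᗮ ∈ End.invtSubmodule U.toLinearMap := by
  intro x hx
  rw [Submodule.mem_comap, Submodule.mem_orthogonal]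
  intro y hy
  have hsurj : Function.Surjective (U.toLinearMap.restrict hp) :=
    LinearMap.injective_iff_surjective.mp fun a b hab =>
      Subtype.ext (U.injective (congrArg Subtype.val hab))
  obtain ⟨y', hy'⟩ := hsurj ⟨y, hy⟩
  have hUy' : U y' = y := congrArg Subtype.val hy'
  rw [← hUy', coe_toLinearMap, inner_map_map]
  exact hx y' y'.2

theorem isSemisimple [FiniteDimensional 𝕜 E] (U : E →ₗᵢ[𝕜] E) :
    End.IsSemisimple U.toLinearMap :=
  End.isSemisimple_iff.mpr fun p hp =>
    ⟨pᗮ, U.orthogonal_mem_invtSubmodule hp, p.isCompl_orthogonal⟩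

end LinearIsometry

end InnerProductSpace

theorem Module.End.IsSemisimple.exists_eq_sum_hasEigenvector {K V : Type*} [Field K]
    [IsAlgClosed K] [AddCommGroup V] [Module K V] [FiniteDimensional K V] {f : End K V}
    (hf : f.IsSemisimple) (v : V) :
    ∃ m ≤ finrank K V, ∃ (μ : Fin m → K) (w : Fin m → V),
      (∀ k, f.HasEigenvector (μ k) (w k)) ∧ v = ∑ k, w k := by
  have hv : v ∈ ⨆ μ, f.eigenspace μ := hf.iSup_eigenspace_eq_top ▸ Submodule.mem_top
  obtain ⟨F, hFmem, rfl⟩ := (Submodule.mem_iSup_iff_exists_finsupp _ _).mp hv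
  have hvec : ∀ μ : F.support, f.HasEigenvector μ (F μ) :=
    fun μ => ⟨hFmem μ, Finsupp.mem_support_iff.mp μ.2⟩
  have hcard : F.support.card ≤ finrank K V := by
    simpa using
      (f.eigenvectors_linearIndependent' _ Subtype.coe_injective _ hvec).fintype_card_le_finrank
  let e := F.support.equivFin
  refine ⟨_, hcard, fun k => e.symm k, fun k => F (e.symm k), fun k => hvec _, ?_⟩
  rw [Finsupp.sum, ← Finset.sum_coe_sort, ← e.symm.sum_comp]

def Matrix.IsToeplitz {α : Type*} {N : ℕ} (T : Matrix (Fin N) (Fin N) α) : Prop :=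
  ∀ (i j : Fin N) (hi : (i : ℕ) + 1 < N) (hj : (j : ℕ) + 1 < N), T ⟨i + 1, hi⟩ ⟨j + 1, hj⟩ = T i j

theorem Matrix.IsToeplitz.apply_succ_succ {α : Type*} {n : ℕ}
    {T : Matrix (Fin (n + 1)) (Fin (n + 1)) α} (hT : T.IsToeplitz) (i j : Fin n) :
    T i.succ j.succ = T i.castSucc j.castSucc :=
  hT i.castSucc j.castSucc (by simp) (by simp)

theorem Matrix.isToeplitz_one {α : Type*} [Zero α] [One α] {N : ℕ} :
    (1 : Matrix (Fin N) (Fin N) α).IsToeplitz := by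
  intro i j hi hj
  simp [one_apply, Fin.ext_iff]

theorem Toep_isToeplitz {N : ℕ} (u : Fin N → ℂ) : (Toep u).IsToeplitz := by
  intro i j hi hj
  simp only [Toep, of_apply, Nat.add_le_add_iff_right, Nat.add_sub_add_right]

theorem steer_apply_eq_pow (N : ℕ) (f : ℝ) (j : Fin N) :
    steer N f j = Complex.exp (2 * Real.pi * Complex.I * f) ^ (j : ℕ) := by
  rw [steer, ← Complex.exp_nat_mul]
  ring_nf

theorem exists_steer_eq_pow {μ : ℂ} (hμ : ‖μ‖ = 1) (N : ℕ) :
    ∃ f ∈ Set.Ico (0 : ℝ) 1, steer N f = fun j : Fin N => μ ^ (j : ℕ) := by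
  obtain ⟨θ, rfl⟩ := (Complex.norm_eq_one_iff μ).mp hμ
  refine ⟨Int.fract (θ / (2 * Real.pi)), ⟨Int.fract_nonneg _, Int.fract_lt_one _⟩, ?_⟩
  funext j
  rw [steer_apply_eq_pow]
  congr 1
  have hπ : (Real.pi : ℂ) ≠ 0 := Complex.ofReal_ne_zero.mpr Real.pi_ne_zero
  rw [Int.fract, Complex.ofReal_sub, Complex.ofReal_intCast, mul_sub, Complex.exp_sub,
    mul_comm _ ((⌊_⌋ : ℤ) : ℂ), Complex.exp_int_mul_two_pi_mul_I, div_one]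
  congr 1
  push_cast
  field_simp

theorem exists_steer_decomposition_of_isToeplitz {F : Type*} [NormedAddCommGroup F]
    [InnerProductSpace ℂ F] {N : ℕ} (x : Fin N → F) (hx : (gram ℂ x).IsToeplitz) (y : F) :
    ∃ K ≤ finrank ℂ (Submodule.span ℂ (Set.range x)), ∃ (f : Fin K → ℝ) (s : Fin K → ℂ),
      (∀ k, f k ∈ Set.Ico (0 : ℝ) 1) ∧ (fun i => ⟪x i, y⟫_ℂ) = ∑ k, s k • steer N (f k) := by
  cases N with
  | zero => exact ⟨0, Nat.zero_le _, Fin.elim0, Fin.elim0, fun k => k.elim0, Subsingleton.elim _ _⟩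
  | succ n =>
    let W := Submodule.span ℂ (Set.range x)
    have : FiniteDimensional ℂ W := FiniteDimensional.span_of_finite ℂ (Set.finite_range x)
    let x' : Fin (n + 1) → W := fun i => ⟨x i, Submodule.subset_span (Set.mem_range_self i)⟩
    obtain ⟨U, hU⟩ := exists_linearIsometry_castSucc_eq_succ x' hx.apply_succ_succ
    have hiter : ∀ j : Fin (n + 1), x' j = (U.toLinearMap ^ (j : ℕ)) (x' 0) := by
      refine Fin.induction rfl fun i ih => ?_
      rw [← hU, ih, Fin.val_succ, Fin.val_castSucc, pow_succ', End.mul_apply,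
        LinearIsometry.coe_toLinearMap]
    obtain ⟨K, hK, μ, w, hw, h0⟩ := U.isSemisimple.exists_eq_sum_hasEigenvector (x' 0)
    choose f hf hsteer using fun k =>
      exists_steer_eq_pow ((Complex.norm_conj _).trans (U.norm_eq_one_of_hasEigenvector (hw k)))
        (n + 1)
    refine ⟨K, hK, f, fun k => ⟪(w k : F), y⟫_ℂ, hf, funext fun i => ?_⟩
    have hxi : x i = ∑ k, μ k ^ (i : ℕ) • (w k : F) := by
      have := congrArg Subtype.val (hiter i)
      rw [h0, map_sum] at this
      simpa [(hw _).pow_apply] using this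
    simp [hxi, hsteer, Finset.sum_apply]

theorem Toep_sum {ι : Type*} {N : ℕ} (s : Finset ι) (u : ι → Fin N → ℂ) :
    Toep (∑ k ∈ s, u k) = ∑ k ∈ s, Toep (u k) := by
  ext i j
  simp only [Toep, of_apply, Matrix.sum_apply, Finset.sum_apply]
  split_ifs <;> simp

theorem Toep_star_steer_apply {N : ℕ} (f : ℝ) (i j : Fin N) :
    Toep (star (steer N f)) i j = steer N f i * star (steer N f j) := by
  have hω : Complex.exp (2 * Real.pi * Complex.I * f) *
      star (Complex.exp (2 * Real.pi * Complex.I * f)) = 1 := by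
    simp [Complex.mul_conj, Complex.normSq_eq_norm_sq, Complex.norm_exp]
  simp only [Toep, of_apply, Pi.star_apply, star_star, steer_apply_eq_pow, star_pow]
  generalize Complex.exp (2 * Real.pi * Complex.I * f) = ω at hω ⊢
  split_ifs with h
  · obtain ⟨d, hd⟩ := Nat.exists_eq_add_of_le h
    rw [hd, Nat.add_sub_cancel_left, pow_add, ← mul_assoc, ← mul_pow, hω, one_pow, one_mul]
  · obtain ⟨d, hd⟩ := Nat.exists_eq_add_of_le (Nat.le_of_not_le h)
    rw [hd, Nat.add_sub_cancel_left, pow_add, mul_right_comm, ← mul_pow, hω, one_pow, one_mul]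

noncomputable def steerMatrix (N : ℕ) {K : ℕ} (f : Fin K → ℝ) : Matrix (Fin N) (Fin K) ℂ :=
  of fun j k => steer N (f k) j

theorem Toep_sum_star_steer {N K : ℕ} (f : Fin K → ℝ) :
    Toep (∑ k, star (steer N (f k))) = steerMatrix N f * (steerMatrix N f)ᴴ := by
  ext i j
  simp [Toep_sum, Matrix.sum_apply, Toep_star_steer_apply, mul_apply, steerMatrix]

theorem smvBlock_eq_mul_conjTranspose {N K : ℕ} (f : Fin K → ℝ) (s : Fin K → ℂ) :
    smvBlock (∑ k, ‖s k‖ ^ 2) (∑ k, s k • steer N (f k)) (∑ k, star (steer N (f k))) =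
      fromRows (of fun _ : Fin 1 => star s) (steerMatrix N f) *
        (fromRows (of fun _ : Fin 1 => star s) (steerMatrix N f))ᴴ := by
  rw [smvBlock, conjTranspose_fromRows_eq_fromCols_conjTranspose, fromRows_mul_fromCols,
    Toep_sum_star_steer]
  congr 1 <;> ext
  all_goals simp [mul_apply, steerMatrix, Finset.sum_apply, Complex.mul_conj,
    Complex.normSq_eq_norm_sq, mul_comm]

theorem exists_posSemidef_smvBlock_rank_le {N K : ℕ} (f : Fin K → ℝ) (s : Fin K → ℂ) :
    ∃ (x : ℝ) (u : Fin N → ℂ),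
      (smvBlock x (∑ k, s k • steer N (f k)) u).PosSemidef ∧ (Toep u).rank ≤ K := by
  refine ⟨_, _, (smvBlock_eq_mul_conjTranspose f s).symm ▸
    posSemidef_self_mul_conjTranspose _, ?_⟩
  rw [Toep_sum_star_steer]
  exact (rank_mul_le_left _ _).trans (rank_le_width _)

theorem atomL0_le_of_eq_sum {N K : ℕ} {z : Fin N → ℂ} (f : Fin K → ℝ) (s : Fin K → ℂ)
    (hf : ∀ k, f k ∈ Set.Ico (0 : ℝ) 1) (hz : z = ∑ k, s k • steer N (f k)) : atomL0 z ≤ K :=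
  Nat.sInf_le ⟨f, s, hf, hz⟩

theorem exists_eq_sum_steer_atomL0 {N : ℕ} (z : Fin N → ℂ) :
    ∃ (f : Fin (atomL0 z) → ℝ) (s : Fin (atomL0 z) → ℂ),
      (∀ k, f k ∈ Set.Ico (0 : ℝ) 1) ∧ z = ∑ k, s k • steer N (f k) := by
  let e := EuclideanSpace.basisFun (Fin N) ℂ
  have he : (gram ℂ fun i => e i).IsToeplitz := by
    rw [gram_eq_one_iff_orthonormal.mpr e.orthonormal]
    exact isToeplitz_one
  obtain ⟨K, -, f, s, hf, hz⟩ := exists_steer_decomposition_of_isToeplitz _ he (WithLp.toLp 2 z)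
  have hne : {K | ∃ (f : Fin K → ℝ) (s : Fin K → ℂ),
      (∀ k, f k ∈ Set.Ico (0 : ℝ) 1) ∧ z = ∑ k, s k • steer N (f k)}.Nonempty :=
    ⟨K, f, s, hf, (funext fun i => by simp [e, EuclideanSpace.inner_single_left]).trans hz⟩
  exact Nat.sInf_mem hne

open scoped MatrixOrder in
theorem atomL0_le_rank_Toep {N : ℕ} {x : ℝ} {z u : Fin N → ℂ}
    (h : (smvBlock x z u).PosSemidef) : atomL0 z ≤ (Toep u).rank := by
  obtain ⟨B, hB⟩ := CStarAlgebra.nonneg_iff_eq_star_mul_self.mp h.nonneg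
  rw [star_eq_conjTranspose, conjTranspose_mul_self_eq_gram] at hB
  set v := fun p => WithLp.toLp 2 fun q => B q p
  have hT : Toep u = gram ℂ (v ∘ Sum.inr) := by
    ext i j
    simpa [smvBlock] using congr_fun₂ hB (Sum.inr i) (Sum.inr j)
  have hz : z = fun i => ⟪v (Sum.inr i), v (Sum.inl 0)⟫_ℂ := by
    ext i
    simpa [smvBlock] using congr_fun₂ hB (Sum.inr i) (Sum.inl 0)
  obtain ⟨K, hK, f, s, hf, hsum⟩ := exists_steer_decomposition_of_isToeplitz (v ∘ Sum.inr)
    (hT ▸ Toep_isToeplitz u) (v (Sum.inl 0))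
  calc atomL0 z ≤ K := atomL0_le_of_eq_sum f s hf (hz.trans hsum)
    _ ≤ (Toep u).rank := by rwa [hT, rank_gram]

/-- The atomic ℓ0 norm equals the attained minimum of `rank T(u)` over the
feasible set of the semidefinite program. -/
theorem stmt6 {N : ℕ} (z : Fin N → ℂ) :
    IsLeast {r : ℕ | ∃ (x : ℝ) (u : Fin N → ℂ),
      (smvBlock x z u).PosSemidef ∧ r = (Toep u).rank} (atomL0 z) := by
  obtain ⟨f, s, -, hz⟩ := exists_eq_sum_steer_atomL0 z
  obtain ⟨x, u, hpsd, hrank⟩ := exists_posSemidef_smvBlock_rank_le (N := N) f s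
  rw [← hz] at hpsd
  refine ⟨⟨x, u, hpsd, le_antisymm (atomL0_le_rank_Toep hpsd) hrank⟩, ?_⟩
  rintro r ⟨x, u, h, rfl⟩
  exact atomL0_le_rank_Toep h
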